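/- arXiv:1810.06547 — 4 statements merged into one kernel-verified Lean document; each statement's English description precedes it below -/
import Mathlib

section
/- Consider the discrete-time Markov chain on ℕ × ℕ whose transition kernel is: from a state (x,0) it moves to (x+1,1) with probability 1; from a state (x,1) it moves to (x+1,2) with probability 1/(x²+1) and to (x,0) with probability x²/(x²+1); every state (x,y) with y ≥ 2 is absorbing. Then there exists k₀ ∈ ℕ such that, under the trajectory law of this chain started at (k₀,0), the probability of the event {there exists n with second coordinate of X_n at least 2} is strictly less than 1. -/
open MeasureTheory ENNReal
open scoped ENNReal

/-- Transition probabilities of the boundary-layer chain of CRN2 on `ℕ × ℕ`: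
from `(x,0)` to `(x+1,1)` with probability `1`; from `(x,1)` to `(x+1,2)` with
probability `1/(x²+1)` and to `(x,0)` with probability `x²/(x²+1)`; every state
`(x,y)` with `y ≥ 2` is absorbing. -/
noncomputable def pCRN2 (s t : ℕ × ℕ) : ℝ≥0∞ :=
  if s.2 = 0 then (if t = (s.1 + 1, 1) then 1 else 0)
  else if s.2 = 1 then
    (if t = (s.1 + 1, 2) then 1 / ((s.1 : ℝ≥0∞) ^ 2 + 1) else 0)
      + (if t = (s.1, 0) then (s.1 : ℝ≥0∞) ^ 2 / ((s.1 : ℝ≥0∞) ^ 2 + 1) else 0)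
  else (if t = s then 1 else 0)

/-- `μ` is the trajectory law (Ionescu–Tulcea law) on `(ℕ×ℕ)^ℕ` of the Markov chain
with one-step transition probabilities `p` started at `s₀`: it is a probability
measure whose finite-dimensional cylinder probabilities are prescribed by `p` and
the point mass at `s₀`. -/
def IsTrajLaw (p : ℕ × ℕ → ℕ × ℕ → ℝ≥0∞) (s₀ : ℕ × ℕ)
    (μ : Measure (ℕ → ℕ × ℕ)) : Prop :=
  IsProbabilityMeasure μ ∧
  μ {ω | ω 0 = s₀} = 1 ∧
  ∀ (n : ℕ) (f : ℕ → ℕ × ℕ),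
    μ {ω | ∀ i ≤ n + 1, ω i = f i} = μ {ω | ∀ i ≤ n, ω i = f i} * p (f n) (f (n + 1))

open scoped NNReal

lemma keyNN (m : ℕ) :
    (1/2 + 1/((m:ℝ≥0)+3)) ≤ (1/2 + 1/((m:ℝ≥0)+2)) * (((m:ℝ≥0)+3)^2 / (((m:ℝ≥0)+3)^2+1)) := by
  rw [← NNReal.coe_le_coe]
  push_cast
  have hm : (0:ℝ) ≤ m := Nat.cast_nonneg m
  rw [div_add_div _ _ (by norm_num) (by positivity), div_add_div _ _ (by norm_num) (by positivity),
    div_mul_div_comm, div_le_div_iff₀ (by positivity) (by positivity)]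
  ring_nf
  nlinarith [sq_nonneg ((m:ℝ)), sq_nonneg ((m:ℝ)+1)]

lemma key (m : ℕ) :
    1/2 + 1/((m:ℝ≥0∞)+3) ≤ (1/2 + 1/((m:ℝ≥0∞)+2)) * (((m:ℝ≥0∞)+3)^2 / (((m:ℝ≥0∞)+3)^2+1)) := by
  have h2 : ((m:ℝ≥0)+2) ≠ 0 := by positivity
  have h3 : ((m:ℝ≥0)+3) ≠ 0 := by positivity
  have h4 : (((m:ℝ≥0)+3)^2+1) ≠ 0 := by positivity
  have := ENNReal.coe_le_coe.mpr (keyNN m)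
  push_cast [ENNReal.coe_div h2, ENNReal.coe_div h3, ENNReal.coe_div h4,
    ENNReal.coe_div (two_ne_zero)] at this
  exact this


/-- There exists `k₀` such that, under the trajectory law of the boundary-layer chain
of CRN2 started at `(k₀, 0)`, the probability of ever reaching a state with second
coordinate at least `2` is strictly less than `1` (transience of CRN2). -/
theorem stmt4 :
    ∃ k₀ : ℕ, ∀ μ : Measure (ℕ → ℕ × ℕ), IsTrajLaw pCRN2 (k₀, 0) μ →
      μ {ω | ∃ n : ℕ, 2 ≤ (ω n).2} < 1 := by
  use 2
  intro μ hμ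
  obtain ⟨hprob, h0, hrec⟩ := hμ
  set f : ℕ → ℕ × ℕ := fun n => (2 + (n+1)/2, n % 2) with hf
  set A : ℕ → Set (ℕ → ℕ × ℕ) := fun n => {ω | ∀ i ≤ n, ω i = f i} with hA
  have hmeas : ∀ n, MeasurableSet (A n) := by
    intro n
    have : A n = ⋂ i ∈ Set.Iic n, (fun ω : ℕ → ℕ × ℕ => ω i) ⁻¹' {f i} := by
      ext ω; simp [hA]
    rw [this]
    exact MeasurableSet.biInter (Set.to_countable _)
      (fun i _ => (measurable_pi_apply i) (MeasurableSet.singleton _))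
  have hA0 : μ (A 0) = 1 := by
    have : A 0 = {ω : ℕ → ℕ × ℕ | ω 0 = ((2:ℕ), (0:ℕ))} := by
      ext ω; simp [hA, hf, Nat.le_zero]
    rw [this]; exact h0
  have hanti : Antitone A := fun a b hab ω hω i hi => hω i (hi.trans hab)
  have hinv : ∀ n, 1/2 + 1/((2 + n/2 : ℕ) : ℝ≥0∞) ≤ μ (A n) := by
    intro n
    induction n with
    | zero =>
      rw [hA0]
      norm_num
      rw [ENNReal.inv_two_add_inv_two]
    | succ n ih =>
      have hrecn : μ (A (n+1)) = μ (A n) * pCRN2 (f n) (f (n+1)) := hrec n f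
      rcases Nat.even_or_odd n with ⟨m, rfl⟩ | ⟨m, rfl⟩
      · -- n = m + m : deterministic step, probability 1
        have e1 : f (m + m) = (2 + m, 0) := by
          simp only [hf]; congr 1 <;> omega
        have e2 : f (m + m + 1) = (2 + m + 1, 1) := by
          simp only [hf]; congr 1 <;> omega
        have hp : pCRN2 (f (m+m)) (f (m+m+1)) = 1 := by
          rw [e1, e2]; simp [pCRN2]
        rw [hrecn, hp, mul_one]
        have : (2 + (m + m + 1)/2 : ℕ) = (2 + (m + m)/2 : ℕ) := by omega
        rw [this]; exact ih
      · -- n = 2m + 1 : loop step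
        have e1 : f (2*m + 1) = (3 + m, 1) := by
          simp only [hf]; congr 1 <;> omega
        have e2 : f (2*m + 1 + 1) = (3 + m, 0) := by
          simp only [hf]; congr 1 <;> omega
        have hp : pCRN2 (f (2*m+1)) (f (2*m+1+1)) =
            ((m:ℝ≥0∞)+3)^2 / (((m:ℝ≥0∞)+3)^2+1) := by
          rw [e1, e2]
          simp only [pCRN2]
          norm_num [Prod.ext_iff]
          ring_nf
        rw [hrecn, hp]
        have g1 : (2 + (2*m + 1)/2 : ℕ) = m + 2 := by omega
        have g2 : (2 + (2*m + 1 + 1)/2 : ℕ) = m + 3 := by omega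
        rw [g2]
        calc 1/2 + 1/((m + 3 : ℕ) : ℝ≥0∞)
            = 1/2 + 1/((m:ℝ≥0∞)+3) := by push_cast; ring_nf
          _ ≤ (1/2 + 1/((m:ℝ≥0∞)+2)) * (((m:ℝ≥0∞)+3)^2 / (((m:ℝ≥0∞)+3)^2+1)) := key m
          _ ≤ μ (A (2*m+1)) * (((m:ℝ≥0∞)+3)^2 / (((m:ℝ≥0∞)+3)^2+1)) := by
              refine mul_le_mul' ?_ le_rfl
              have := ih
              rw [g1] at this
              calc 1/2 + 1/((m:ℝ≥0∞)+2) = 1/2 + 1/((m + 2 : ℕ) : ℝ≥0∞) := by push_cast; ring_nf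
                _ ≤ _ := this
  have hiInf : 1/2 ≤ μ (⋂ n, A n) := by
    rw [Antitone.measure_iInter hanti (fun n => (hmeas n).nullMeasurableSet)
      ⟨0, by rw [hA0]; exact one_ne_top⟩]
    exact le_iInf fun n => le_trans le_self_add (hinv n)
  have hsub : {ω : ℕ → ℕ × ℕ | ∃ n, 2 ≤ (ω n).2} ⊆ (⋂ n, A n)ᶜ := by
    intro ω hω hωA
    obtain ⟨n, hn⟩ := hω
    have h := (Set.mem_iInter.mp hωA n) n le_rfl
    rw [h] at hn
    simp only [hf] at hn
    omega
  calc μ {ω : ℕ → ℕ × ℕ | ∃ n, 2 ≤ (ω n).2} ≤ μ (⋂ n, A n)ᶜ := measure_mono hsub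
    _ = 1 - μ (⋂ n, A n) := by
        rw [measure_compl (MeasurableSet.iInter hmeas) (measure_ne_top μ _), measure_univ]
    _ ≤ 1 - 1/2 := tsub_le_tsub_left hiInf 1
    _ < 1 := by
        rw [one_div, ENNReal.one_sub_inv_two, ← one_div]
        exact ENNReal.half_lt_self one_ne_zero one_ne_top
end

section
/- Consider the discrete-time Markov chain on ℕ × ℕ whose transition kernel is: from a state (x,0) it moves to (x+1,1) with probability 1; from a state (x,1) it moves to (x+1,2) with probability 1/(x+1) and to (x,0) with probability x/(x+1); every state (x,y) with y ≥ 2 is absorbing. Then for every k₀ ∈ ℕ with k₀ ≥ 1, under the trajectory law of this chain started at (k₀,0), the event {there exists n with second coordinate of X_n at least 2} has probability 1. -/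
open MeasureTheory ENNReal
open scoped ENNReal

/-- Transition probabilities of the boundary-layer chain of CRN1 on `ℕ × ℕ`:
from `(x,0)` to `(x+1,1)` with probability `1`; from `(x,1)` to `(x+1,2)` with
probability `1/(x+1)` and to `(x,0)` with probability `x/(x+1)`; every state
`(x,y)` with `y ≥ 2` is absorbing. -/
noncomputable def pCRN1 (s t : ℕ × ℕ) : ℝ≥0∞ :=
  if s.2 = 0 then (if t = (s.1 + 1, 1) then 1 else 0)
  else if s.2 = 1 then
    (if t = (s.1 + 1, 2) then 1 / ((s.1 : ℝ≥0∞) + 1) else 0)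
      + (if t = (s.1, 0) then (s.1 : ℝ≥0∞) / ((s.1 : ℝ≥0∞) + 1) else 0)
  else (if t = s then 1 else 0)

/-! From any state the chain has at most one move into the strip `{y ≤ 1}`, namely
`(x, 0) → (x + 1, 1)` and `(x, 1) → (x, 0)`. So up to a null set a trajectory that never leaves
the strip follows one fixed path, and the probability of following it for `2 m` steps telescopes
to `(k₀ + 1) / (k₀ + m + 1)`, which tends to `0`. -/

namespace IsTrajLaw

variable {p : ℕ × ℕ → ℕ × ℕ → ℝ≥0∞} {s₀ : ℕ × ℕ} {μ : Measure (ℕ → ℕ × ℕ)}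

lemma ae_eq_start (h : IsTrajLaw p s₀ μ) : ∀ᵐ ω ∂μ, ω 0 = s₀ := by
  have := h.1
  have hmeas : MeasurableSet {ω : ℕ → ℕ × ℕ | ω 0 = s₀} :=
    (measurableSet_singleton s₀).preimage (measurable_pi_apply 0)
  exact (prob_compl_eq_zero_iff hmeas).2 h.2.1

lemma measure_cylinder (h : IsTrajLaw p s₀ μ) {g : ℕ → ℕ × ℕ} (hg : g 0 = s₀) (n : ℕ) :
    μ {ω | ∀ i ≤ n, ω i = g i} = ∏ i ∈ Finset.range n, p (g i) (g (i + 1)) := by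
  induction n with
  | zero => simpa [hg] using h.2.1
  | succ n ih => rw [h.2.2, ih, Finset.prod_range_succ]

lemma measure_cylinder_eq_zero (h : IsTrajLaw p s₀ μ) {f : ℕ → ℕ × ℕ} {n : ℕ}
    (hf : p (f n) (f (n + 1)) = 0) : μ {ω | ∀ i ≤ n + 1, ω i = f i} = 0 := by
  rw [h.2.2, hf, mul_zero]

lemma ae_eq_path_of_stays (h : IsTrajLaw p s₀ μ) {S : Set (ℕ × ℕ)} {g : ℕ → ℕ × ℕ}
    (hg : g 0 = s₀) (hforced : ∀ n, ∀ t ∈ S, t ≠ g (n + 1) → p (g n) t = 0) (n : ℕ) :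
    ∀ᵐ ω ∂μ, (∀ i ≤ n, ω i ∈ S) → ∀ i ≤ n, ω i = g i := by
  induction n with
  | zero =>
    filter_upwards [h.ae_eq_start] with ω hω _ i hi
    rw [Nat.le_zero.1 hi, hω, hg]
  | succ n ih =>
    have hdeviate : ∀ᵐ ω ∂μ, ∀ t ∈ S, t ≠ g (n + 1) →
        ¬ ∀ i ≤ n + 1, ω i = Function.update g (n + 1) t i := by
      refine ae_all_iff.2 fun t => ?_
      by_cases ht : t ∈ S ∧ t ≠ g (n + 1)
      · have hnull := measure_eq_zero_iff_ae_notMem.1 <| h.measure_cylinder_eq_zero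
          (f := Function.update g (n + 1) t) (n := n) <| by
          rw [Function.update_self, Function.update_of_ne (by omega)]
          exact hforced n t ht.1 ht.2
        filter_upwards [hnull] with ω hω _ _ using hω
      · exact Filter.Eventually.of_forall fun ω h₁ h₂ => absurd ⟨h₁, h₂⟩ ht
    filter_upwards [ih, hdeviate] with ω hprefix hω hS i hi
    have hprefix := hprefix fun i hi => hS i (by omega)
    obtain hi | rfl := Nat.lt_or_eq_of_le hi
    · exact hprefix i (by omega)
    · by_contra hne
      refine hω _ (hS _ le_rfl) hne fun i hi => ?_
      obtain hi | rfl := Nat.lt_or_eq_of_le hi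
      · rw [Function.update_of_ne (by omega)]
        exact hprefix i (by omega)
      · rw [Function.update_self]

end IsTrajLaw

def stripNext (s : ℕ × ℕ) : ℕ × ℕ :=
  if s.2 = 0 then (s.1 + 1, 1) else (s.1, 0)

lemma pCRN1_eq_zero_of_ne_stripNext {s t : ℕ × ℕ} (ht : t.2 ≤ 1) (hne : t ≠ stripNext s) :
    pCRN1 s t = 0 := by
  obtain ⟨x, y⟩ := s
  obtain rfl | rfl | hy : y = 0 ∨ y = 1 ∨ 2 ≤ y := by omega
  · simpa [pCRN1, stripNext] using hne
  · have : t ≠ (x + 1, 2) := by rintro rfl; simp at ht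
    simp_all [pCRN1, stripNext]
  · have : t ≠ (x, y) := by rintro rfl; simp at ht; omega
    simp [pCRN1, this, show y ≠ 0 by omega, show y ≠ 1 by omega]

def stripPath (k₀ n : ℕ) : ℕ × ℕ :=
  stripNext^[n] (k₀, 0)

lemma stripPath_succ (k₀ n : ℕ) : stripPath k₀ (n + 1) = stripNext (stripPath k₀ n) :=
  Function.iterate_succ_apply' ..

lemma stripPath_two_mul (k₀ m : ℕ) : stripPath k₀ (2 * m) = (k₀ + m, 0) := by
  induction m with
  | zero => rfl
  | succ m ih =>
    rw [show 2 * (m + 1) = 2 * m + 1 + 1 by ring, stripPath_succ, stripPath_succ, ih]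
    simp [stripNext, add_assoc]

lemma pCRN1_stripPath_two_steps (k₀ m : ℕ) :
    pCRN1 (stripPath k₀ (2 * m)) (stripPath k₀ (2 * m + 1)) *
        pCRN1 (stripPath k₀ (2 * m + 1)) (stripPath k₀ (2 * m + 1 + 1)) =
      ((k₀ + m + 1 : ℕ) : ℝ≥0∞) / (k₀ + m + 2 : ℕ) := by
  simp only [stripPath_succ, stripPath_two_mul]
  simp [pCRN1, stripNext, add_assoc, one_add_one_eq_two]

lemma mul_prod_pCRN1_stripPath (k₀ m : ℕ) :
    ((k₀ + m + 1 : ℕ) : ℝ≥0∞) *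
        ∏ i ∈ Finset.range (2 * m), pCRN1 (stripPath k₀ i) (stripPath k₀ (i + 1)) =
      (k₀ + 1 : ℕ) := by
  induction m with
  | zero => simp
  | succ m ih =>
    rw [show 2 * (m + 1) = 2 * m + 1 + 1 by ring, Finset.prod_range_succ, Finset.prod_range_succ,
      mul_assoc, pCRN1_stripPath_two_steps,
      show k₀ + (m + 1) + 1 = k₀ + m + 2 by ring, mul_left_comm,
      ENNReal.mul_div_cancel (by simp) (by simp), mul_comm, ih]

theorem stmt5_general (k₀ : ℕ) :
    ∀ μ : Measure (ℕ → ℕ × ℕ), IsTrajLaw pCRN1 (k₀, 0) μ →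
      μ {ω | ∃ n : ℕ, 2 ≤ (ω n).2} = 1 := by
  intro μ hμ
  have := hμ.1
  have hfollow := hμ.ae_eq_path_of_stays (S := {t | t.2 ≤ 1}) (g := stripPath k₀) rfl
    fun n t ht hne => pCRN1_eq_zero_of_ne_stripNext ht (stripPath_succ k₀ n ▸ hne)
  have hbound (m : ℕ) : (m : ℝ≥0∞) * μ {ω | ∀ n, (ω n).2 ≤ 1} ≤ (k₀ + 1 : ℕ) := calc
    (m : ℝ≥0∞) * μ {ω | ∀ n, (ω n).2 ≤ 1}
      ≤ ((k₀ + m + 1 : ℕ) : ℝ≥0∞) * μ {ω | ∀ i ≤ 2 * m, ω i = stripPath k₀ i} := by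
        refine mul_le_mul' (by exact_mod_cast (by omega : m ≤ k₀ + m + 1)) ?_
        exact measure_mono_ae <| (hfollow (2 * m)).mono
          fun ω h (hω : ∀ n, (ω n).2 ≤ 1) => h fun i _ => hω i
    _ = (k₀ + 1 : ℕ) := by
        rw [hμ.measure_cylinder (g := stripPath k₀) rfl, mul_prod_pCRN1_stripPath]
  have hnull : μ {ω | ∀ n, (ω n).2 ≤ 1} = 0 := by
    by_contra h
    obtain ⟨m, hm⟩ := ENNReal.exists_nat_mul_gt h (ENNReal.natCast_ne_top (k₀ + 1))
    exact (hbound m).not_gt hm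
  rw [← measure_univ (μ := μ)]
  exact measure_congr <| ae_eq_univ.2 <| by simpa [Set.compl_ofPred] using hnull

/-- For every `k₀ ≥ 1`, under the trajectory law of the boundary-layer chain of CRN1
started at `(k₀, 0)`, the chain reaches a state with second coordinate at least `2`
with probability `1`. -/
theorem stmt5 (k₀ : ℕ) (hk : 1 ≤ k₀) :
    ∀ μ : Measure (ℕ → ℕ × ℕ), IsTrajLaw pCRN1 (k₀, 0) μ →
      μ {ω | ∃ n : ℕ, 2 ≤ (ω n).2} = 1 :=
  stmt5_general k₀
end

section
/- Let δ > 0 and m, h > 0 be real, and define V₄ : ℕ × ℕ → ℝ by V₄(x₁,x₂) = m·x₂^{δ} + h·(∑_{k=1}^{x₁} 1/(δ + (k choose 5)·5!))·x₂^{δ}. Define the operator T₄ on functions f : ℕ × ℕ → ℝ by T₄f(x₁,x₂) = x₂³·(f(x₁, x₂−1) − f(x₁,x₂)) + (x₁ choose 5)·5!·x₂²·(f(x₁−5, x₂) − f(x₁,x₂)) (the term x₂³ vanishes when x₂ = 0, and (x₁ choose 5) = 0 when x₁ < 5, so the truncated subtractions are harmless). Then there exist C > 0 and N ∈ ℕ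 such that for all x₁ ∈ ℕ and all x₂ ≥ N, T₄V₄(x₁,x₂) ≤ −C·x₂^{δ+2}. -/
/-!
Write `V₄(x₁, x₂) = W(x₁)·x₂^δ` with `W(x₁) = m + h·∑_{k ≤ x₁} …`, which is nondecreasing in
`x₁` and bounded below by `m`. The reaction term of `T₄` moves `x₁` down to `x₁ − 5`, so it
contributes `≤ 0`; the degradation term equals `−W(x₁)·x₂³·(x₂^δ − (x₂ − 1)^δ)`. The tangent-line
(Bernoulli) inequalities for `t ↦ t^δ` give `x₂^δ − (x₂ − 1)^δ ≥ c·x₂^(δ−1)` for `x₂ ≥ 2`, with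
`c = δ·min(1, 2^(1−δ))`, hence `T₄V₄ ≤ −m·c·x₂^(δ+2)`.
-/

/-- The local Lyapunov function in the priming region `𝕋₄` (case `δ' = 0`,
`δ'' − 2 = δ`): `V₄(x₁,x₂) = m·x₂^δ + h·(∑_{k=1}^{x₁} 1/(δ + (k choose 5)·5!))·x₂^δ`. -/
noncomputable def V4 (m h δ : ℝ) (x₁ x₂ : ℕ) : ℝ :=
  m * (x₂ : ℝ) ^ δ +
    h * (∑ k ∈ Finset.Icc 1 x₁,
      1 / (δ + (k.choose 5 : ℝ) * (Nat.factorial 5 : ℝ))) * (x₂ : ℝ) ^ δ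

/-- The dominant part of the generator in the priming region:
`T₄f(x₁,x₂) = x₂³·(f(x₁,x₂−1) − f(x₁,x₂)) + (x₁ choose 5)·5!·x₂²·(f(x₁−5,x₂) − f(x₁,x₂))`
(truncated natural subtraction; harmless since `x₂³ = 0` at `x₂ = 0` and
`(x₁ choose 5) = 0` for `x₁ < 5`). -/
noncomputable def T4 (f : ℕ → ℕ → ℝ) (x₁ x₂ : ℕ) : ℝ :=
  (x₂ : ℝ) ^ 3 * (f x₁ (x₂ - 1) - f x₁ x₂) +
    (x₁.choose 5 : ℝ) * (Nat.factorial 5 : ℝ) * (x₂ : ℝ) ^ 2 * (f (x₁ - 5) x₂ - f x₁ x₂)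

open Real

section Tangent

variable {a b δ : ℝ}

lemma neg_one_le_div_of_nonneg_add (ha : 0 < a) (hab : 0 ≤ a + b) : -1 ≤ b / a := by
  rw [le_div_iff₀ ha]; linarith

lemma rpow_add_eq_rpow_mul_rpow_one_add_div (ha : 0 < a) (hab : 0 ≤ a + b) :
    (a + b) ^ δ = a ^ δ * (1 + b / a) ^ δ := by
  have : 0 ≤ 1 + b / a := by linarith [neg_one_le_div_of_nonneg_add ha hab]
  rw [← mul_rpow ha.le this, mul_one_add, mul_div_cancel₀ b ha.ne']

lemma rpow_tangent_eq (ha : 0 < a) : a ^ δ + δ * a ^ (δ - 1) * b = a ^ δ * (1 + δ * (b / a)) := by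
  rw [rpow_sub_one ha.ne']; field_simp

lemma rpow_tangent_le_rpow_add (hδ : 1 ≤ δ) (ha : 0 < a) (hab : 0 ≤ a + b) :
    a ^ δ + δ * a ^ (δ - 1) * b ≤ (a + b) ^ δ := by
  rw [rpow_tangent_eq ha, rpow_add_eq_rpow_mul_rpow_one_add_div ha hab]
  exact mul_le_mul_of_nonneg_left
    (one_add_mul_self_le_rpow_one_add (neg_one_le_div_of_nonneg_add ha hab) hδ) (by positivity)

lemma rpow_add_le_rpow_tangent (hδ₀ : 0 ≤ δ) (hδ₁ : δ ≤ 1) (ha : 0 < a) (hab : 0 ≤ a + b) :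
    (a + b) ^ δ ≤ a ^ δ + δ * a ^ (δ - 1) * b := by
  rw [rpow_tangent_eq ha, rpow_add_eq_rpow_mul_rpow_one_add_div ha hab]
  exact mul_le_mul_of_nonneg_left
    (rpow_one_add_le_one_add_mul_self (neg_one_le_div_of_nonneg_add ha hab) hδ₀ hδ₁) (by positivity)

end Tangent

lemma mul_rpow_sub_one_le_rpow_sub_rpow_sub_one {δ y : ℝ} (hδ : 0 < δ) (hy : 2 ≤ y) :
    δ * min 1 (2 ^ (1 - δ)) * y ^ (δ - 1) ≤ y ^ δ - (y - 1) ^ δ := by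
  have hy₀ : 0 < y := by linarith
  rcases le_total δ 1 with hδ₁ | hδ₁
  · have htangent := rpow_add_le_rpow_tangent (b := -1) hδ.le hδ₁ hy₀ (by linarith)
    have : δ * min 1 (2 ^ (1 - δ)) * y ^ (δ - 1) ≤ δ * y ^ (δ - 1) := by
      gcongr
      exact mul_le_of_le_one_right hδ.le (min_le_left _ _)
    rw [← sub_eq_add_neg] at htangent
    linarith
  · have htangent := rpow_tangent_le_rpow_add (b := 1) hδ₁ (a := y - 1) (by linarith) (by linarith)
    have halve : 2 ^ (1 - δ) * y ^ (δ - 1) ≤ (y - 1) ^ (δ - 1) := by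
      calc 2 ^ (1 - δ) * y ^ (δ - 1) = (y / 2) ^ (δ - 1) := by
            rw [div_rpow hy₀.le zero_le_two, div_eq_mul_inv, ← rpow_neg zero_le_two, neg_sub, mul_comm]
        _ ≤ (y - 1) ^ (δ - 1) := by gcongr; linarith
    have : δ * min 1 (2 ^ (1 - δ)) * y ^ (δ - 1) ≤ δ * (y - 1) ^ (δ - 1) := by
      rw [mul_assoc]
      gcongr
      exact (mul_le_mul_of_nonneg_right (min_le_right _ _) (by positivity)).trans halve
    rw [sub_add_cancel] at htangent
    linarith

noncomputable def V4Weight (m h δ : ℝ) (x₁ : ℕ) : ℝ :=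
  m + h * ∑ k ∈ Finset.Icc 1 x₁, 1 / (δ + (k.choose 5 : ℝ) * (Nat.factorial 5 : ℝ))

section Weight

variable {m h δ : ℝ}

lemma V4_eq_weight_mul (x₁ x₂ : ℕ) : V4 m h δ x₁ x₂ = V4Weight m h δ x₁ * (x₂ : ℝ) ^ δ := by
  rw [V4, V4Weight]; ring

lemma le_V4Weight (hh : 0 ≤ h) (hδ : 0 ≤ δ) (x₁ : ℕ) : m ≤ V4Weight m h δ x₁ :=
  le_add_of_nonneg_right (mul_nonneg hh (Finset.sum_nonneg fun _ _ => by positivity))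

lemma V4Weight_mono (hh : 0 ≤ h) (hδ : 0 ≤ δ) : Monotone (V4Weight m h δ) := fun _ _ hx =>
  add_le_add_right (mul_le_mul_of_nonneg_left (Finset.sum_le_sum_of_subset_of_nonneg
    (Finset.Icc_subset_Icc_right hx) fun _ _ _ => by positivity) hh) m

end Weight

lemma T4_V4_le {m h δ : ℝ} (hh : 0 ≤ h) (hδ : 0 ≤ δ) (x₁ : ℕ) {x₂ : ℕ} (hx₂ : 1 ≤ x₂) :
    T4 (V4 m h δ) x₁ x₂ ≤ -(m * (x₂ : ℝ) ^ 3 * ((x₂ : ℝ) ^ δ - ((x₂ : ℝ) - 1) ^ δ)) := by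
  have hgap : 0 ≤ (x₂ : ℝ) ^ δ - ((x₂ : ℝ) - 1) ^ δ := by
    have : (1 : ℝ) ≤ x₂ := by exact_mod_cast hx₂
    exact sub_nonneg.2 (rpow_le_rpow (by linarith) (by linarith) hδ)
  have hweight_drop : V4Weight m h δ (x₁ - 5) - V4Weight m h δ x₁ ≤ 0 :=
    sub_nonpos.2 (V4Weight_mono hh hδ (Nat.sub_le x₁ 5))
  have hweight := le_V4Weight hh hδ x₁ (m := m)
  rw [T4, V4_eq_weight_mul, V4_eq_weight_mul, V4_eq_weight_mul, Nat.cast_sub hx₂, Nat.cast_one]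
  have hrate : 0 ≤ (x₁.choose 5 : ℝ) * (Nat.factorial 5 : ℝ) * (x₂ : ℝ) ^ 2 * (x₂ : ℝ) ^ δ := by
    positivity
  linarith [mul_le_mul_of_nonneg_right hweight (mul_nonneg (pow_nonneg (Nat.cast_nonneg x₂) 3) hgap),
    mul_nonpos_of_nonneg_of_nonpos hrate hweight_drop]

/-- Foster–Lyapunov drift condition in the priming region: for `δ > 0` and `m, h > 0`
there exist `C > 0` and `N` such that `T₄V₄(x₁,x₂) ≤ −C·x₂^{δ+2}` for all `x₁` and all
`x₂ ≥ N`. -/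
theorem stmt8 (δ m h : ℝ) (hδ : 0 < δ) (hm : 0 < m) (hh : 0 < h) :
    ∃ C > (0 : ℝ), ∃ N : ℕ, ∀ x₁ x₂ : ℕ, N ≤ x₂ →
      T4 (V4 m h δ) x₁ x₂ ≤ -C * (x₂ : ℝ) ^ (δ + 2) := by
  set c := δ * min 1 ((2 : ℝ) ^ (1 - δ))
  have hc : 0 < c := mul_pos hδ (lt_min one_pos (rpow_pos_of_pos two_pos _))
  refine ⟨m * c, mul_pos hm hc, 2, fun x₁ x₂ hx₂ => ?_⟩
  have hy : (2 : ℝ) ≤ x₂ := by exact_mod_cast hx₂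
  have hpow : (x₂ : ℝ) ^ 3 * (x₂ : ℝ) ^ (δ - 1) = (x₂ : ℝ) ^ (δ + 2) := by
    rw [← rpow_natCast, ← rpow_add (by linarith)]; congr 1; push_cast; ring
  calc T4 (V4 m h δ) x₁ x₂
      ≤ -(m * (x₂ : ℝ) ^ 3 * ((x₂ : ℝ) ^ δ - ((x₂ : ℝ) - 1) ^ δ)) :=
        T4_V4_le hh.le hδ.le x₁ (by omega)
    _ ≤ -(m * (x₂ : ℝ) ^ 3 * (c * (x₂ : ℝ) ^ (δ - 1))) := by
        gcongr
        exact mul_rpow_sub_one_le_rpow_sub_rpow_sub_one hδ hy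
    _ = -(m * c) * (x₂ : ℝ) ^ (δ + 2) := by rw [← hpow]; ring
end

section
/- Let δ ∈ (0,1) and let μ₁, μ₂, h be real numbers with μ₁ > 0, h > 0, and 0 < μ₂ < μ₁·(1−δ) − h. Then there exist c > 0 and N > 0 such that for every real x₁ ≥ N, μ₂·(x₁+1)^{δ} − μ₁·x₁^{δ} + x₁·( μ₁·(x₁+1)^{δ} + h·x₁^{δ−1} − μ₁·x₁^{δ} ) ≤ −c·x₁^{δ}. -/
/-- Drift inequality verifying the Foster–Lyapunov condition for CRN1 on the level
`{x₂ = 1}` of the diffusive region: for `δ ∈ (0,1)`, `μ₁ > 0`, `h > 0` and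
`0 < μ₂ < μ₁·(1−δ) − h`, there exist `c > 0` and `N > 0` such that for all `x₁ ≥ N`,
`μ₂·(x₁+1)^δ − μ₁·x₁^δ + x₁·(μ₁·(x₁+1)^δ + h·x₁^{δ−1} − μ₁·x₁^δ) ≤ −c·x₁^δ`. -/
theorem stmt19 (δ μ₁ μ₂ h : ℝ) (hδ0 : 0 < δ) (hδ1 : δ < 1) (hμ₁ : 0 < μ₁) (hh : 0 < h)
    (hμ₂0 : 0 < μ₂) (hμ₂ : μ₂ < μ₁ * (1 - δ) - h) :
    ∃ c > (0 : ℝ), ∃ N > (0 : ℝ), ∀ x₁ : ℝ, N ≤ x₁ →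
      μ₂ * (x₁ + 1) ^ δ - μ₁ * x₁ ^ δ
          + x₁ * (μ₁ * (x₁ + 1) ^ δ + h * x₁ ^ (δ - 1) - μ₁ * x₁ ^ δ)
        ≤ -c * x₁ ^ δ := by
  set g : ℝ := μ₁ * (1 - δ) - h - μ₂ with hg
  have hgpos : 0 < g := by linarith
  refine ⟨g / 2, by linarith, max 1 (2 * μ₂ * δ / g), lt_of_lt_of_le one_pos (le_max_left _ _),
    fun x hx => ?_⟩
  have hx1 : (1 : ℝ) ≤ x := le_trans (le_max_left _ _) hx
  have hx0 : 0 < x := lt_of_lt_of_le one_pos hx1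
  have hx2 : 2 * μ₂ * δ / g ≤ x := le_trans (le_max_right _ _) hx
  -- key estimate : (x+1)^δ ≤ x^δ * (1 + δ/x)
  have hkey : (x + 1) ^ δ ≤ x ^ δ * (1 + δ / x) := by
    have h1 : x + 1 = x * (1 + 1 / x) := by field_simp
    have h2 : ((1 : ℝ) + 1 / x) ^ δ ≤ 1 + δ * (1 / x) :=
      rpow_one_add_le_one_add_mul_self (le_trans (by norm_num : (-1:ℝ) ≤ 0) (by positivity)) hδ0.le hδ1.le
    calc (x + 1) ^ δ = x ^ δ * (1 + 1 / x) ^ δ := by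
          rw [h1, Real.mul_rpow hx0.le (by positivity)]
      _ ≤ x ^ δ * (1 + δ * (1 / x)) := by
          exact mul_le_mul_of_nonneg_left h2 (Real.rpow_nonneg hx0.le δ)
      _ = x ^ δ * (1 + δ / x) := by ring
  have hsub : x ^ (δ - 1) = x ^ δ / x := by
    rw [Real.rpow_sub hx0, Real.rpow_one]
  have ht : 0 < x ^ δ := Real.rpow_pos_of_pos hx0 δ
  set t : ℝ := x ^ δ with htdef
  rw [hsub]
  -- from hx2 : μ₂ * δ * 2 ≤ g * x
  have hx2' : 2 * μ₂ * δ ≤ g * x := by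
    rw [div_le_iff₀ hgpos] at hx2; linarith
  have hkey' : (x + 1) ^ δ ≤ t * (1 + δ / x) := hkey
  -- bound the two occurrences of (x+1)^δ
  have hb1 : μ₂ * (x + 1) ^ δ ≤ μ₂ * (t * (1 + δ / x)) :=
    mul_le_mul_of_nonneg_left hkey' hμ₂0.le
  have hb2 : x * (μ₁ * (x + 1) ^ δ + h * (t / x) - μ₁ * t)
      ≤ x * (μ₁ * (t * (1 + δ / x)) + h * (t / x) - μ₁ * t) := by
    apply mul_le_mul_of_nonneg_left _ hx0.le
    have := mul_le_mul_of_nonneg_left hkey' hμ₁.le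
    linarith
  have hgoal : μ₂ * (t * (1 + δ / x)) - μ₁ * t
      + x * (μ₁ * (t * (1 + δ / x)) + h * (t / x) - μ₁ * t) ≤ -(g / 2) * t := by
    have e1 : x * (μ₁ * (t * (1 + δ / x)) + h * (t / x) - μ₁ * t)
        = μ₁ * δ * t + h * t := by field_simp; ring
    have e2 : μ₂ * (t * (1 + δ / x)) = μ₂ * t + μ₂ * δ * (t / x) := by
      field_simp
    rw [e1, e2]
    have e3 : μ₂ * δ * (t / x) ≤ g / 2 * t := by
      have h4 : (0:ℝ) ≤ t / x := by positivity
      have h5 : 2 * μ₂ * δ * (t / x) ≤ g * x * (t / x) :=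
        mul_le_mul_of_nonneg_right hx2' h4
      have h6 : g * x * (t / x) = g * t := by field_simp
      linarith
    have : μ₂ * t + μ₁ * δ * t + h * t - μ₁ * t = -g * t := by rw [hg]; ring
    nlinarith
  linarith
end
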